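/- Let n be a positive integer such that S = lspec(n) is balanced and excessive, and let m₀ = max S₀. Then L(n) = (m₀/2)·E(S). -/

import Mathlib

/-- The length spectrum of `n`: the set of lengths `l` of decompositions of `n`,
i.e. sequences `a, a+1, ..., a+(l-1)` of `l ≥ 1` consecutive positive integers summing to `n`. -/
def lspec (n : ℕ) : Set ℕ :=
  {l | 0 < l ∧ ∃ a : ℕ, 0 < a ∧ ∑ i ∈ Finset.range l, (a + i) = n}

/-- `A₀`: the even elements of `A`. -/
def evens (A : Set ℕ) : Set ℕ := {x ∈ A | Even x}

/-- `A₁`: the odd elements of `A`. -/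
def odds (A : Set ℕ) : Set ℕ := {x ∈ A | Odd x}

/-- The spectral class of `n`: positive integers with the same length spectrum as `n`. -/
def specClass (n : ℕ) : Set ℕ := {m | 0 < m ∧ lspec m = lspec n}

/-- A set is balanced if it has equally many even and odd elements. -/
def balancedSet (S : Set ℕ) : Prop := (evens S).encard = (odds S).encard

/-- A set is unmixed if it has no even elements. -/
def unmixedSet (S : Set ℕ) : Prop := evens S = ∅

/-- A set is lopsided if it is neither balanced nor unmixed. -/
def lopsidedSet (S : Set ℕ) : Prop := ¬ balancedSet S ∧ ¬ unmixedSet S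

/-- The set of ratios `m'/m` over pairs of complementary factors `m ≤ m'` of `k`;
`q(k)` is the least element of this set. -/
def qSet (k : ℕ) : Set ℚ :=
  {r | ∃ m m' : ℕ, 0 < m ∧ m ≤ m' ∧ m * m' = k ∧ r = (m' : ℚ) / (m : ℚ)}

/-- The exceptional set `E(S)`: numbers `a = b·c` with `b, c ∈ S₁`, `a > max S₀`, and
whose set of divisors of `(max S₁)·a` strictly below `a` is exactly `S₁`. -/
def excSet (S : Set ℕ) : Set ℕ :=
  {a | (∃ b ∈ odds S, ∃ c ∈ odds S, a = b * c) ∧ sSup (evens S) < a ∧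
    {d | d ∣ sSup (odds S) * a ∧ d < a} = odds S}

/-- `P(S)`: the primes strictly greater than `max S₀`. -/
def primesAbove (S : Set ℕ) : Set ℕ := {p | p.Prime ∧ sSup (evens S) < p}

/-- A balanced spectrum is non-excessive if `S₁` is exactly the set of divisors of `max S₁`. -/
def nonExcessive (S : Set ℕ) : Prop := odds S = {d | d ∣ sSup (odds S)}

/-- `γ_p`: the largest `k` with `p^k ∈ S₁`. -/
noncomputable def gammaIdx (S : Set ℕ) (p : ℕ) : ℕ := sSup {k | p ^ k ∈ odds S}

/-- `μ_p = v_p(max S₁)`. -/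
noncomputable def muIdx (S : Set ℕ) (p : ℕ) : ℕ := (sSup (odds S)).factorization p

/-- The excessive index `ε_p = γ_p − μ_p` of a prime `p` with respect to `S`. -/
noncomputable def excIdx (S : Set ℕ) (p : ℕ) : ℕ := gammaIdx S p - muIdx S p

/-- The difference set `D(S)`: `S₁` with its `|S₀|` smallest elements removed when
`|S₀| ≤ |S₁|`, and empty otherwise.  An element `x` of `S₁` survives exactly when at least
`|S₀|` elements of `S₁` lie strictly below it. -/
def diffSet (S : Set ℕ) : Set ℕ :=
  {x ∈ odds S | (evens S).encard ≤ {y ∈ odds S | y < x}.encard}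

section AuxSpectral

private lemma sum_shift' (l' c : ℕ) :
    ∑ i ∈ Finset.range (l' + 1), (c + i) = (l' + 1) * c + l' * (l' + 1) / 2 := by
  rw [Finset.sum_add_distrib, Finset.sum_const, Finset.card_range, smul_eq_mul,
    Finset.sum_range_id]
  congr 1
  simp [mul_comm]

private lemma tri_even' (l' : ℕ) : 2 * (l' * (l' + 1) / 2) = l' * (l' + 1) := by
  obtain ⟨r, hr⟩ := Nat.even_mul_succ_self l'
  omega

private lemma mem_lspec_iff {n l : ℕ} :
    l ∈ lspec n ↔ 0 < l ∧ l ∣ 2 * n ∧ l * l < 2 * n ∧ Odd (l + 2 * n / l) := by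
  constructor
  · rintro ⟨hl, a, ha, hsum⟩
    obtain ⟨l', rfl⟩ : ∃ l', l = l' + 1 := ⟨l - 1, by omega⟩
    obtain ⟨a', rfl⟩ : ∃ a', a = a' + 1 := ⟨a - 1, by omega⟩
    rw [sum_shift'] at hsum
    have hev := tri_even' l'
    have key : (l' + 1) * ((l' + 1) + (2 * a' + 1)) = 2 * n := by
      have : 2 * ((l' + 1) * (a' + 1)) + l' * (l' + 1) = 2 * n := by omega
      rw [← this]; ring
    refine ⟨hl, ⟨_, key.symm⟩, ?_, ?_⟩
    · calc (l' + 1) * (l' + 1) < (l' + 1) * ((l' + 1) + (2 * a' + 1)) :=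
            (Nat.mul_lt_mul_left hl).mpr (by omega)
        _ = 2 * n := key
    · have hdiv : 2 * n / (l' + 1) = (l' + 1) + (2 * a' + 1) := by
        rw [← key, Nat.mul_div_cancel_left _ hl]
      rw [hdiv]
      exact ⟨l' + 1 + a', by ring⟩
  · rintro ⟨hl, hdvd, hlt, hodd⟩
    obtain ⟨l', rfl⟩ : ∃ l', l = l' + 1 := ⟨l - 1, by omega⟩
    set M := 2 * n / (l' + 1) with hM
    have hlM : (l' + 1) * M = 2 * n := Nat.mul_div_cancel' hdvd
    have hltM : l' + 1 < M := by
      by_contra h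
      push_neg at h
      have : (l' + 1) * M ≤ (l' + 1) * (l' + 1) := Nat.mul_le_mul_left _ h
      omega
    obtain ⟨j, hj⟩ : ∃ j, M = (l' + 1) + (2 * j + 1) := by
      obtain ⟨k, hk⟩ := hodd
      refine ⟨(k - (l' + 1)), by omega⟩
    refine ⟨hl, j + 1, by omega, ?_⟩
    rw [sum_shift']
    have hev := tri_even' l'
    have expand : (l' + 1) * M = 2 * ((l' + 1) * (j + 1)) + l' * (l' + 1) := by
      rw [hj]; ring
    have h3 : 2 * ((l' + 1) * (j + 1)) + l' * (l' + 1) = 2 * n := expand.symm.trans hlM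
    omega

private lemma two_mul_eq' {s : ℕ} (q : ℕ) (hs : 1 ≤ s) :
    2 * (2 ^ (s - 1) * q) = 2 ^ s * q := by
  obtain ⟨s', rfl⟩ : ∃ s', s = s' + 1 := ⟨s - 1, by omega⟩
  simp only [Nat.add_sub_cancel, pow_succ]
  ring

private lemma odd_dvd_of_dvd' {s q d : ℕ} (h : d ∣ 2 ^ s * q) (hd : Odd d) : d ∣ q :=
  (Nat.Coprime.pow_right s (Nat.coprime_two_right.mpr hd)).dvd_of_dvd_mul_left h

private lemma odds_lspec {s q : ℕ} (hs : 1 ≤ s) (hq : Odd q) (hq0 : 0 < q) :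
    odds (lspec (2 ^ (s - 1) * q)) = {d | d ∣ q ∧ d * d < 2 ^ s * q} := by
  ext d
  simp only [odds, Set.mem_setOf_eq, mem_lspec_iff, two_mul_eq' q hs]
  constructor
  · rintro ⟨⟨hd0, hdvd, hlt, _⟩, hodd⟩
    exact ⟨odd_dvd_of_dvd' hdvd hodd, hlt⟩
  · rintro ⟨hdvd, hlt⟩
    have hd0 : 0 < d := Nat.pos_of_dvd_of_pos hdvd hq0
    have hodd : Odd d := hq.of_dvd_nat hdvd
    refine ⟨⟨hd0, hdvd.mul_left _, hlt, ?_⟩, hodd⟩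
    have : 2 ^ s * q / d = 2 ^ s * (q / d) := Nat.mul_div_assoc _ hdvd
    rw [this]
    refine hodd.add_even ?_
    obtain ⟨s', rfl⟩ : ∃ s', s = s' + 1 := ⟨s - 1, by omega⟩
    exact ⟨2 ^ s' * (q / d), by ring⟩

private lemma evens_lspec {s q : ℕ} (hs : 1 ≤ s) (hq : Odd q) (hq0 : 0 < q) :
    evens (lspec (2 ^ (s - 1) * q))
      = (fun e => 2 ^ s * e) '' {e | e ∣ q ∧ 2 ^ s * (e * e) < q} := by
  ext l
  simp only [evens, Set.mem_setOf_eq, mem_lspec_iff, two_mul_eq' q hs, Set.mem_image]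
  constructor
  · rintro ⟨⟨hl0, hdvd, hlt, hoddsum⟩, heven⟩
    set M := 2 ^ s * q / l with hM
    have hlM : l * M = 2 ^ s * q := Nat.mul_div_cancel' hdvd
    have hModd : Odd M := by
      rcases Nat.even_or_odd M with hM2 | hM2
      · exfalso
        rw [Nat.odd_add] at hoddsum
        rw [← Nat.not_even_iff_odd] at hoddsum
        simp [heven, hM2] at hoddsum
      · exact hM2
    have hMq : M ∣ q := odd_dvd_of_dvd' ⟨l, by rw [← hlM]; ring⟩ hModd
    have hM0 : 0 < M := Nat.pos_of_dvd_of_pos hMq hq0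
    have he : M * (q / M) = q := Nat.mul_div_cancel' hMq
    have hle : l = 2 ^ s * (q / M) := by
      have h : l * M = (2 ^ s * (q / M)) * M := by
        rw [hlM]
        conv_lhs => rw [← he]
        ring
      exact Nat.eq_of_mul_eq_mul_right hM0 h
    refine ⟨q / M, ⟨Nat.div_dvd_of_dvd hMq, ?_⟩, hle.symm⟩
    have h1 : (2 ^ s * (q / M)) * (2 ^ s * (q / M)) < 2 ^ s * q := by rw [← hle]; exact hlt
    have h2 : 2 ^ s * (2 ^ s * ((q / M) * (q / M))) < 2 ^ s * q := by
      calc 2 ^ s * (2 ^ s * ((q / M) * (q / M)))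
            = (2 ^ s * (q / M)) * (2 ^ s * (q / M)) := by ring
        _ < 2 ^ s * q := h1
    exact Nat.lt_of_mul_lt_mul_left h2
  · rintro ⟨e, ⟨hdvd, hlt⟩, rfl⟩
    have he0 : 0 < e := Nat.pos_of_dvd_of_pos hdvd hq0
    have h2s : 0 < 2 ^ s := pow_pos (by norm_num) s
    obtain ⟨s', rfl⟩ : ∃ s', s = s' + 1 := ⟨s - 1, by omega⟩
    refine ⟨⟨by positivity, mul_dvd_mul_left _ hdvd, ?_, ?_⟩, ⟨2 ^ s' * e, by ring⟩⟩
    · calc 2 ^ (s' + 1) * e * (2 ^ (s' + 1) * e)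
            = 2 ^ (s' + 1) * (2 ^ (s' + 1) * (e * e)) := by ring
        _ < 2 ^ (s' + 1) * q := (Nat.mul_lt_mul_left h2s).mpr hlt
    · have hdd : 2 ^ (s' + 1) * q / (2 ^ (s' + 1) * e) = q / e := by
        rw [Nat.mul_div_mul_left _ _ h2s]
      rw [hdd]
      have hqe : Odd (q / e) := hq.of_dvd_nat (Nat.div_dvd_of_dvd hdvd)
      exact Even.add_odd ⟨2 ^ s' * e, by ring⟩ hqe

private lemma parts_eq {A B : Set ℕ} (ho : odds A = odds B) (he : evens A = evens B) :
    A = B := by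
  ext x
  rcases Nat.even_or_odd x with hx | hx
  · constructor <;> intro h
    · have : x ∈ evens B := he ▸ (⟨h, hx⟩ : x ∈ evens A)
      exact this.1
    · have : x ∈ evens A := he.symm ▸ (⟨h, hx⟩ : x ∈ evens B)
      exact this.1
  · constructor <;> intro h
    · have : x ∈ odds B := ho ▸ (⟨h, hx⟩ : x ∈ odds A)
      exact this.1
    · have : x ∈ odds A := ho.symm ▸ (⟨h, hx⟩ : x ∈ odds B)
      exact this.1

private lemma balanced_struct {s q : ℕ} (hs : 1 ≤ s) (hq : Odd q) (hq0 : 0 < q)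
    (hb : balancedSet (lspec (2 ^ (s - 1) * q))) :
    odds (lspec (2 ^ (s - 1) * q)) = {d | d ∣ q ∧ d * d < q} ∧
    {e | e ∣ q ∧ 2 ^ s * (e * e) < q} = {d | d ∣ q ∧ d * d < q} := by
  have h2s : 0 < 2 ^ s := pow_pos (by norm_num) s
  set L : Set ℕ := {d | d ∣ q ∧ d * d < q} with hL
  set O : Set ℕ := {d | d ∣ q ∧ d * d < 2 ^ s * q} with hO
  set E : Set ℕ := {e | e ∣ q ∧ 2 ^ s * (e * e) < q} with hE
  have hEL : E ⊆ L := by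
    rintro e ⟨hdvd, hlt⟩
    exact ⟨hdvd, lt_of_le_of_lt (Nat.le_mul_of_pos_left _ h2s) hlt⟩
  have hLO : L ⊆ O := by
    rintro d ⟨hdvd, hlt⟩
    exact ⟨hdvd, lt_of_lt_of_le hlt (Nat.le_mul_of_pos_left _ h2s)⟩
  have hfin : O.Finite := by
    apply (Set.finite_le_nat q).subset
    rintro d ⟨hdvd, -⟩
    exact Nat.le_of_dvd hq0 hdvd
  have hinj : Set.InjOn (fun e => 2 ^ s * e) E :=
    fun x _ y _ h => Nat.eq_of_mul_eq_mul_left h2s h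
  have hcard : E.encard = O.encard := by
    have h1 := hb
    unfold balancedSet at h1
    rw [odds_lspec hs hq hq0, evens_lspec hs hq hq0] at h1
    rw [← hinj.encard_image]
    exact h1
  have hEO : E = O :=
    (hfin.subset (hEL.trans hLO)).eq_of_subset_of_encard_le (hEL.trans hLO) hcard.ge
  have hOL : O = L := le_antisymm (hEO ▸ hEL) hLO
  exact ⟨(odds_lspec hs hq hq0).trans hOL, hEO.trans hOL⟩

end AuxSpectral

/-- If `S = lspec n` is balanced and excessive, then `L(n) = (m₀/2)·E(S)`. -/
theorem specClass_of_excessive (n : ℕ) (hn : 0 < n) (hb : balancedSet (lspec n))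
    (hex : ¬ nonExcessive (lspec n)) :
    specClass n = (fun a => sSup (evens (lspec n)) / 2 * a) '' excSet (lspec n) := by
  obtain ⟨s, q, hq2, h2n⟩ :=
    Nat.exists_eq_pow_mul_and_not_dvd (n := 2 * n) (by omega) 2 (by norm_num)
  have hq : Odd q := Nat.odd_iff.mpr (by omega)
  have hq0 : 0 < q := by
    rcases Nat.eq_zero_or_pos q with h | h
    · subst h; rw [mul_zero] at h2n; omega
    · exact h
  have hs : 1 ≤ s := by
    rcases Nat.eq_zero_or_pos s with h | h
    · exfalso; subst h; rw [pow_zero, one_mul] at h2n; exact hq2 ⟨n, h2n.symm⟩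
    · exact h
  have h2s : 0 < 2 ^ s := pow_pos (by norm_num) s
  have h2le : 2 ≤ 2 ^ s := by
    calc 2 = 2 ^ 1 := (pow_one 2).symm
    _ ≤ 2 ^ s := Nat.pow_le_pow_right (by norm_num) hs
  have hnq : n = 2 ^ (s - 1) * q := by
    have h := two_mul_eq' q hs
    omega
  subst hnq
  obtain ⟨hodds, hEidx⟩ := balanced_struct hs hq hq0 hb
  set L : Set ℕ := {d | d ∣ q ∧ d * d < q} with hLdef
  have hbddL : BddAbove L := ⟨q, fun d hd => Nat.le_of_dvd hq0 hd.1⟩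
  have h1L : (1 : ℕ) ∈ L := by
    have h1O : (1 : ℕ) ∈ odds (lspec (2 ^ (s - 1) * q)) := by
      rw [odds_lspec hs hq hq0]
      refine ⟨one_dvd q, ?_⟩
      calc 1 * 1 = 1 := one_mul 1
      _ < 2 := one_lt_two
      _ ≤ 2 ^ s := h2le
      _ = 2 ^ s * 1 := (mul_one _).symm
      _ ≤ 2 ^ s * q := Nat.mul_le_mul_left _ hq0
    rwa [hodds] at h1O
  have hLne : L.Nonempty := ⟨1, h1L⟩
  have hm1L : sSup L ∈ L := Nat.sSup_mem hLne hbddL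
  have hm1pos : 0 < sSup L := Nat.pos_of_dvd_of_pos hm1L.1 hq0
  have hm1odd : Odd (sSup L) := hq.of_dvd_nat hm1L.1
  have hdown : ∀ d x, d ∣ x → x ∈ L → d ∈ L := by
    rintro d x hdx ⟨hxq, hxlt⟩
    have hx0 : 0 < x := Nat.pos_of_dvd_of_pos hxq hq0
    have hdle : d ≤ x := Nat.le_of_dvd hx0 hdx
    exact ⟨hdx.trans hxq, lt_of_le_of_lt (Nat.mul_le_mul hdle hdle) hxlt⟩
  have hevensL : evens (lspec (2 ^ (s - 1) * q)) = (fun e => 2 ^ s * e) '' L := by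
    rw [evens_lspec hs hq hq0, hEidx]
  have hbddim : BddAbove ((fun e => 2 ^ s * e) '' L) := by
    refine ⟨2 ^ s * q, ?_⟩
    rintro x ⟨e, he, rfl⟩
    exact Nat.mul_le_mul_left _ (Nat.le_of_dvd hq0 he.1)
  have hm0 : sSup (evens (lspec (2 ^ (s - 1) * q))) = 2 ^ s * sSup L := by
    rw [hevensL]
    apply le_antisymm
    · refine csSup_le ⟨2 ^ s * sSup L, ⟨sSup L, hm1L, rfl⟩⟩ ?_
      rintro x ⟨e, he, rfl⟩
      exact Nat.mul_le_mul_left _ (le_csSup hbddL he)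
    · exact le_csSup hbddim ⟨sSup L, hm1L, rfl⟩
  have hhalf : sSup (evens (lspec (2 ^ (s - 1) * q))) / 2 = 2 ^ (s - 1) * sSup L := by
    rw [hm0]
    obtain ⟨s', rfl⟩ : ∃ s', s = s' + 1 := ⟨s - 1, by omega⟩
    rw [show (2 : ℕ) ^ (s' + 1) * sSup L = 2 * (2 ^ s' * sSup L) by ring]
    simp [Nat.mul_div_cancel_left]
  have hinjf : Function.Injective (fun e => 2 ^ s * e) :=
    fun x y h => Nat.eq_of_mul_eq_mul_left h2s h
  ext m
  constructor
  · -- specClass → image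
    rintro ⟨hmpos, hlsp⟩
    obtain ⟨t, r, hr2, h2m⟩ :=
      Nat.exists_eq_pow_mul_and_not_dvd (n := 2 * m) (by omega) 2 (by norm_num)
    have hrodd : Odd r := Nat.odd_iff.mpr (by omega)
    have hr0 : 0 < r := by
      rcases Nat.eq_zero_or_pos r with h | h
      · subst h; rw [mul_zero] at h2m; omega
      · exact h
    have ht : 1 ≤ t := by
      rcases Nat.eq_zero_or_pos t with h | h
      · exfalso; subst h; rw [pow_zero, one_mul] at h2m; exact hr2 ⟨m, h2m.symm⟩
      · exact h
    have hmr : m = 2 ^ (t - 1) * r := by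
      have h := two_mul_eq' r ht
      omega
    subst hmr
    have hOeq : {d | d ∣ r ∧ d * d < 2 ^ t * r} = L := by
      rw [← odds_lspec ht hrodd hr0, hlsp, hodds]
    have hEimeq : (fun e => 2 ^ t * e) '' {e | e ∣ r ∧ 2 ^ t * (e * e) < r}
        = (fun e => 2 ^ s * e) '' L := by
      rw [← evens_lspec ht hrodd hr0, hlsp, hevensL]
    have hts : s = t := by
      have h1 : 2 ^ s * 1 ∈ (fun e => 2 ^ s * e) '' L := ⟨1, h1L, rfl⟩
      rw [← hEimeq] at h1
      obtain ⟨e, ⟨hedvd, -⟩, heq⟩ := h1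
      simp only [mul_one] at heq
      have heodd : Odd e := hrodd.of_dvd_nat hedvd
      have hedvd2 : e ∣ 2 ^ s := ⟨2 ^ t, by rw [← heq]; ring⟩
      have he1 : e = 1 :=
        Nat.Coprime.eq_one_of_dvd ((Nat.coprime_two_right.mpr heodd).pow_right s) hedvd2
      subst he1
      rw [mul_one] at heq
      exact (Nat.pow_right_injective (le_refl 2) heq).symm
    subst hts
    have hB : {e | e ∣ r ∧ 2 ^ s * (e * e) < r} = L := Set.image_injective.mpr hinjf hEimeq
    have hm1r : sSup L ∣ r ∧ 2 ^ s * (sSup L * sSup L) < r :=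
      (Set.ext_iff.mp hB (sSup L)).mpr hm1L
    have hra : sSup L * (r / sSup L) = r := Nat.mul_div_cancel' hm1r.1
    set a := r / sSup L with hadef
    have hapos : 0 < a := by
      rcases Nat.eq_zero_or_pos a with h | h
      · rw [h, mul_zero] at hra; omega
      · exact h
    have hgt : 2 ^ s * sSup L < a := by
      have h1 : sSup L * (2 ^ s * sSup L) < sSup L * a := by
        rw [hra]
        calc sSup L * (2 ^ s * sSup L) = 2 ^ s * (sSup L * sSup L) := by ring
        _ < r := hm1r.2
      exact Nat.lt_of_mul_lt_mul_left h1
    have hdiveq : {d | d ∣ sSup L * a ∧ d < a} = L := by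
      ext d
      constructor
      · rintro ⟨hdr', hda⟩
        rw [hra] at hdr'
        by_contra hdL
        have hd0 : 0 < d := Nat.pos_of_dvd_of_pos hdr' hr0
        have hdge : 2 ^ s * r ≤ d * d := by
          by_contra hcon
          push_neg at hcon
          exact hdL (by rw [← hOeq]; exact ⟨hdr', hcon⟩)
        have hrd : d * (r / d) = r := Nat.mul_div_cancel' hdr'
        have hd'0 : 0 < r / d := by
          rcases Nat.eq_zero_or_pos (r / d) with h | h
          · rw [h, mul_zero] at hrd; omega
          · exact h
        have hrlt : r < 2 ^ s * r := by
          calc r = 1 * r := (one_mul r).symm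
          _ < 2 ^ s * r := (Nat.mul_lt_mul_right hr0).mpr (lt_of_lt_of_le one_lt_two h2le)
        have hdd' : r / d < d := by
          have h1 : d * (r / d) < d * d := by
            rw [hrd]; exact lt_of_lt_of_le hrlt hdge
          exact Nat.lt_of_mul_lt_mul_left h1
        have hrdL : r / d ∈ L := by
          rw [← hOeq]
          refine ⟨Nat.div_dvd_of_dvd hdr', ?_⟩
          calc (r / d) * (r / d) < (r / d) * d := (Nat.mul_lt_mul_left hd'0).mpr hdd'
          _ = r := by rw [mul_comm]; exact hrd
          _ ≤ 2 ^ s * r := Nat.le_mul_of_pos_left _ h2s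
        have hle' : r / d ≤ sSup L := le_csSup hbddL hrdL
        have h2 : sSup L * a ≤ sSup L * d := by
          rw [hra]
          calc r = (r / d) * d := by rw [mul_comm]; exact hrd.symm
          _ ≤ sSup L * d := Nat.mul_le_mul_right _ hle'
        have : a ≤ d := Nat.le_of_mul_le_mul_left h2 hm1pos
        omega
      · intro hd
        have hd' : d ∣ r ∧ d * d < 2 ^ s * r := by rw [← hOeq] at hd; exact hd
        have hdle : d ≤ sSup L := le_csSup hbddL hd
        refine ⟨by rw [hra]; exact hd'.1, ?_⟩
        calc d ≤ sSup L := hdle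
        _ ≤ 2 ^ s * sSup L := Nat.le_mul_of_pos_left _ h2s
        _ < a := hgt
    have haR : a ∣ r := Dvd.intro_left _ hra
    have haL : a ∉ L := by
      intro h
      have h2 : a * a < 2 ^ s * r := by rw [← hOeq] at h; exact h.2
      have h3 : 2 ^ s * r < a * a := by
        rw [← hra]
        calc 2 ^ s * (sSup L * a) = (2 ^ s * sSup L) * a := by ring
        _ < a * a := (Nat.mul_lt_mul_right hapos).mpr hgt
      omega
    have hexx : ∃ x ∈ L, ¬ x ∣ sSup L := by
      by_contra hall
      push_neg at hall
      apply hex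
      unfold nonExcessive
      rw [hodds]
      ext x
      exact ⟨fun hx => hall x hx, fun hx => hdown x _ hx hm1L⟩
    obtain ⟨x, hxL, hxnd⟩ := hexx
    have hxr : x ∣ r := by rw [← hOeq] at hxL; exact hxL.1
    have hgcd : Nat.gcd x a ≠ 1 := by
      intro h
      refine hxnd (Nat.Coprime.dvd_of_dvd_mul_right h ?_)
      rw [hra]; exact hxr
    have hp : (Nat.gcd x a).minFac.Prime := Nat.minFac_prime hgcd
    have hpx : (Nat.gcd x a).minFac ∣ x := (Nat.minFac_dvd _).trans (Nat.gcd_dvd_left _ _)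
    have hpa : (Nat.gcd x a).minFac ∣ a := (Nat.minFac_dvd _).trans (Nat.gcd_dvd_right _ _)
    have hpL : (Nat.gcd x a).minFac ∈ L := hdown _ x hpx hxL
    have hcc : (Nat.gcd x a).minFac * (a / (Nat.gcd x a).minFac) = a := Nat.mul_div_cancel' hpa
    have hcL : a / (Nat.gcd x a).minFac ∈ L := by
      rw [← hdiveq]
      exact ⟨Dvd.dvd.mul_left (Nat.div_dvd_of_dvd hpa) _,
        Nat.div_lt_self hapos hp.one_lt⟩
    refine ⟨a, ⟨⟨(Nat.gcd x a).minFac, ?_, a / (Nat.gcd x a).minFac, ?_, hcc.symm⟩, ?_, ?_⟩, ?_⟩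
    · rw [hodds]; exact hpL
    · rw [hodds]; exact hcL
    · rw [hm0]; exact hgt
    · rw [hodds]; exact hdiveq
    · show sSup (evens (lspec (2 ^ (s - 1) * q))) / 2 * a = 2 ^ (s - 1) * r
      rw [hhalf, mul_assoc, hra]
  · -- image → specClass
    rintro ⟨a, ⟨⟨b, hbO, c, hcO, habc⟩, hgt', hdiv'⟩, rfl⟩
    rw [hodds] at hbO hcO hdiv'
    rw [hm0] at hgt'
    have hbodd : Odd b := hq.of_dvd_nat hbO.1
    have hcodd : Odd c := hq.of_dvd_nat hcO.1
    have haodd : Odd a := habc ▸ hbodd.mul hcodd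
    have hapos : 0 < a := haodd.pos
    have hrodd : Odd (sSup L * a) := hm1odd.mul haodd
    have hr0 : 0 < sSup L * a := Nat.mul_pos hm1pos hapos
    have hA : {d | d ∣ sSup L * a ∧ d * d < 2 ^ s * (sSup L * a)} = L := by
      ext d
      constructor
      · rintro ⟨hdr, hdlt⟩
        by_contra hdL
        have hda : a ≤ d := by
          by_contra hcon
          push_neg at hcon
          exact hdL (by rw [← hdiv']; exact ⟨hdr, hcon⟩)
        have h3 : 2 ^ s * (sSup L * a) < d * d := by
          calc 2 ^ s * (sSup L * a) = (2 ^ s * sSup L) * a := by ring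
          _ < a * a := (Nat.mul_lt_mul_right hapos).mpr hgt'
          _ ≤ d * d := Nat.mul_le_mul hda hda
        omega
      · intro hd
        have hdm : d ∣ sSup L * a ∧ d < a := by rw [← hdiv'] at hd; exact hd
        have hdle : d ≤ sSup L := le_csSup hbddL hd
        refine ⟨hdm.1, ?_⟩
        calc d * d ≤ (2 ^ s * sSup L) * (2 ^ s * sSup L) :=
              Nat.mul_le_mul (hdle.trans (Nat.le_mul_of_pos_left _ h2s))
                (hdle.trans (Nat.le_mul_of_pos_left _ h2s))
        _ < (2 ^ s * sSup L) * a :=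
              Nat.mul_lt_mul_left (Nat.mul_pos h2s hm1pos) |>.mpr hgt'
        _ = 2 ^ s * (sSup L * a) := by ring
    have hBs : {e | e ∣ sSup L * a ∧ 2 ^ s * (e * e) < sSup L * a} = L := by
      ext e
      constructor
      · rintro ⟨her, helt⟩
        by_contra heL
        have hea : a ≤ e := by
          by_contra hcon
          push_neg at hcon
          exact heL (by rw [← hdiv']; exact ⟨her, hcon⟩)
        have h3 : sSup L * a < 2 ^ s * (e * e) := by
          calc sSup L * a ≤ (2 ^ s * sSup L) * a := by
                exact Nat.mul_le_mul_right _ (Nat.le_mul_of_pos_left _ h2s)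
          _ < a * a := (Nat.mul_lt_mul_right hapos).mpr hgt'
          _ ≤ e * e := Nat.mul_le_mul hea hea
          _ ≤ 2 ^ s * (e * e) := Nat.le_mul_of_pos_left _ h2s
        omega
      · intro he
        have hem : e ∣ sSup L * a ∧ e < a := by rw [← hdiv'] at he; exact he
        have hele : e ≤ sSup L := le_csSup hbddL he
        have he0 : 0 < e := Nat.pos_of_dvd_of_pos he.1 hq0
        refine ⟨hem.1, ?_⟩
        calc 2 ^ s * (e * e) = (2 ^ s * e) * e := by ring
        _ < a * e := (Nat.mul_lt_mul_right he0).mpr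
              (lt_of_le_of_lt (Nat.mul_le_mul_left _ hele) hgt')
        _ ≤ a * sSup L := Nat.mul_le_mul_left _ hele
        _ = sSup L * a := mul_comm _ _
    constructor
    · show 0 < sSup (evens (lspec (2 ^ (s - 1) * q))) / 2 * a
      rw [hhalf]
      have : 0 < 2 ^ (s - 1) := pow_pos (by norm_num) _
      positivity
    · show lspec (sSup (evens (lspec (2 ^ (s - 1) * q))) / 2 * a) = lspec (2 ^ (s - 1) * q)
      rw [hhalf, mul_assoc]
      apply parts_eq
      · rw [odds_lspec hs hrodd hr0, hA, hodds]
      · rw [evens_lspec hs hrodd hr0, hBs, hevensL]
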